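/- (Exact penalization via neighboring feasible trajectories.) Let F(t,x) := {(u, L(t,x,u)) : u ∈ M𝔹} for a fixed M > 0, and let (x̄, z̄) be a global minimizer of problem (P̃): minimize z(T) over F-trajectories (x,z) with (x(S),z(S)) = (x₀,0) and (x(t),z(t)) ∈ A × ℝ for all t ∈ [S,T]. Assume there is a constant K > 0 with the following property: for every F-trajectory (x̂, ẑ) with (x̂(S), ẑ(S)) = (x₀, 0) there exists an F-trajectory (x,z) with (x(S),z(S)) = (x₀,0), (x(t),z(t)) ∈ A × ℝ for all t ∈ [S,T], and ‖(x,z) − (x̂,ẑ)‖_{L∞(S,T)} ≤ K · max_{t∈[S,T]} d_{A×ℝ}(x̂(t), ẑ(t)). Then (x̄, z̄) is a global minimizer of the penalized problem: minimize J(x,z) := z(T) + K · max_{t∈[S,T]} d_{A×ℝ}(x(t), z(t)) over all F-trajectories (x,z) with (x(S), z(S)) = (x₀, 0) and x(S) ∈ A. -/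
import Mathlib


open Set MeasureTheory Filter Topology Metric

noncomputable section

variable {n : ℕ}

/-- An `F`-trajectory for `F(t,x) = {(u, L(t,x,u)) : u ∈ M𝔹}`. -/
def FTrajectory (S T M : ℝ)
    (L : ℝ → EuclideanSpace ℝ (Fin n) → EuclideanSpace ℝ (Fin n) → ℝ)
    (x x' : ℝ → EuclideanSpace ℝ (Fin n)) (z z' : ℝ → ℝ) : Prop :=
  IntegrableOn x' (Icc S T) ∧ IntegrableOn z' (Icc S T) ∧
  (∀ t ∈ Icc S T, x t = x S + ∫ s in Icc S t, x' s) ∧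
  (∀ t ∈ Icc S T, z t = z S + ∫ s in Icc S t, z' s) ∧
  (∀ᵐ t ∂(volume.restrict (Icc S T)),
    ‖x' t‖ ≤ M ∧ z' t = L t (x t) (x' t))

/-- `max_{t ∈ [S,T]} d_{A×ℝ}(x(t),z(t)) = max_{t ∈ [S,T]} d_A(x(t))`: the extent to
which the arc `x` violates the state constraint `A`. -/
def maxViolation (S T : ℝ) (A : Set (EuclideanSpace ℝ (Fin n)))
    (x : ℝ → EuclideanSpace ℝ (Fin n)) : ℝ :=
  ⨆ t : Icc S T, infDist (x t) A

/-- Lemma (exact penalization): if neighboring feasible trajectories with a linear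
`L^∞`-estimate of constant `K` exist, then a global minimizer `(x̄,z̄)` of (P̃) is a
global minimizer of the penalized problem with cost
`J(x,z) = z(T) + K · max_{t∈[S,T]} d_{A×ℝ}(x(t),z(t))`. -/
theorem global_min_penalized_of_NFT
    (S T : ℝ) (hST : S < T)
    (L : ℝ → EuclideanSpace ℝ (Fin n) → EuclideanSpace ℝ (Fin n) → ℝ)
    (x₀ : EuclideanSpace ℝ (Fin n)) (A : Set (EuclideanSpace ℝ (Fin n)))
    (hA : IsClosed A) (hAne : A.Nonempty)
    (M : ℝ) (hM : 0 < M) (K : ℝ) (hK : 0 < K)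
    (xb xb' : ℝ → EuclideanSpace ℝ (Fin n)) (zb zb' : ℝ → ℝ)
    -- `(x̄, z̄)` is a global minimizer of (P̃):
    (hbtraj : FTrajectory S T M L xb xb' zb zb')
    (hbinit : xb S = x₀ ∧ zb S = 0)
    (hbfeas : ∀ t ∈ Icc S T, xb t ∈ A)
    (hbmin : ∀ (x x' : ℝ → EuclideanSpace ℝ (Fin n)) (z z' : ℝ → ℝ),
      FTrajectory S T M L x x' z z' → x S = x₀ → z S = 0 →
      (∀ t ∈ Icc S T, x t ∈ A) → zb T ≤ z T)
    -- neighboring feasible trajectories with a linear `L^∞` estimate: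
    (hNFT : ∀ (xh xh' : ℝ → EuclideanSpace ℝ (Fin n)) (zh zh' : ℝ → ℝ),
      FTrajectory S T M L xh xh' zh zh' → xh S = x₀ → zh S = 0 →
      ∃ (x x' : ℝ → EuclideanSpace ℝ (Fin n)) (z z' : ℝ → ℝ),
        FTrajectory S T M L x x' z z' ∧ x S = x₀ ∧ z S = 0 ∧
        (∀ t ∈ Icc S T, x t ∈ A) ∧
        (∀ t ∈ Icc S T, ‖x t - xh t‖ ≤ K * maxViolation S T A xh ∧
          |z t - zh t| ≤ K * maxViolation S T A xh)) :
    -- conclusion: `(x̄, z̄)` minimizes the penalized cost `J` globally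
    ∀ (x x' : ℝ → EuclideanSpace ℝ (Fin n)) (z z' : ℝ → ℝ),
      FTrajectory S T M L x x' z z' → x S = x₀ → z S = 0 → x S ∈ A →
      zb T + K * maxViolation S T A xb ≤ z T + K * maxViolation S T A x := by
  intro x x' z z' htraj hx0 hz0 _
  have hTmem : T ∈ Icc S T := ⟨le_of_lt hST, le_refl T⟩
  have hne : Nonempty (Icc S T) := ⟨⟨T, hTmem⟩⟩
  -- maxViolation of xb is 0
  have hmvb : maxViolation S T A xb = 0 := by
    unfold maxViolation
    have h0 : ∀ t : Icc S T, infDist (xb t) A = 0 := fun t =>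
      infDist_zero_of_mem (hbfeas t t.2)
    simp [h0]
  obtain ⟨y, y', w, w', hytraj, hy0, hw0, hyfeas, hclose⟩ :=
    hNFT x x' z z' htraj hx0 hz0
  have h1 : zb T ≤ w T := hbmin y y' w w' hytraj hy0 hw0 hyfeas
  have h2 : |w T - z T| ≤ K * maxViolation S T A x := (hclose T hTmem).2
  have h3 : w T ≤ z T + K * maxViolation S T A x := by
    have := abs_le.mp h2
    linarith [this.2]
  rw [hmvb]
  linarith
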